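/- arXiv:2202.09585 — 2 statements merged into one kernel-verified Lean document; each statement's English description precedes it below -/
import Mathlib

section
/- If P_0,…,P_{N−1} and Q_0,…,Q_{N−1} are biorthogonal monic polynomials with normalization constants h_0,…,h_{N−1}, and all the integrals involved are absolutely convergent, then the partition function factorizes as Z_N = ∏_{i=0}^{N−1} h_i. -/
/-!
Column operations turn the Vandermonde products `Δ(X_L)`, `Δ(X_R)` into `det [P_j(x_{L,i})]` and
`det [Q_j(x_{R,i})]`, so the integrand is a product of three determinants. Expanding each over
permutations `σ, τ, ρ`, every term is a product of `N` pair integrands in the variables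
`(x_{L,i}, x_{R,τ i})` and integrates by Fubini to `∏ i ⟨P_{σ i}|ω|Q_{ρ (τ i)}⟩`. Summing the signs
gives the Andréief-type identity `∫ = N!² det [⟨P_i|ω|Q_j⟩]`, and biorthogonality makes this
matrix diagonal with entries `h_i`.
-/

open MeasureTheory Matrix Finset

/-- Vandermonde product `∏_{i<j} (x_i − x_j)` of a real tuple, as a complex number. -/
noncomputable def Delta {n : ℕ} (x : Fin n → ℝ) : ℂ :=
  ∏ i : Fin n, ∏ j ∈ Finset.Ioi i, ((x i : ℂ) - (x j : ℂ))

/-- Vandermonde product `∏_{α<β} (z_α − z_β)` of a complex tuple. -/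
noncomputable def DeltaC {n : ℕ} (z : Fin n → ℂ) : ℂ :=
  ∏ i : Fin n, ∏ j ∈ Finset.Ioi i, (z i - z j)

/-- Integrand of the pairing `⟨f|ω|g⟩`. -/
noncomputable def pairingIntegrand (wL wR : ℝ → ℂ) (ω : ℝ → ℝ → ℂ) (f g : ℝ → ℂ) :
    ℝ × ℝ → ℂ :=
  fun s => wL s.1 * wR s.2 * f s.1 * ω s.1 s.2 * g s.2

/-- The pairing `⟨f|ω|g⟩ = ∫ w_L(x) w_R(y) f(x) ω(x,y) g(y) dx dy`. -/
noncomputable def pairing (wL wR : ℝ → ℂ) (ω : ℝ → ℝ → ℂ) (f g : ℝ → ℂ) : ℂ :=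
  ∫ s : ℝ × ℝ, pairingIntegrand wL wR ω f g s

/-- Integrand of the un-normalized coupled-matrix-model average `I_N[O]`. -/
noncomputable def cmmIntegrand (N : ℕ) (wL wR : ℝ → ℂ) (ω : ℝ → ℝ → ℂ)
    (O : (Fin N → ℝ) → (Fin N → ℝ) → ℂ) : (Fin N → ℝ) × (Fin N → ℝ) → ℂ :=
  fun X => O X.1 X.2 * (∏ i, wL (X.1 i) * wR (X.2 i)) * Delta X.1 *
    (Matrix.of fun i j => ω (X.1 i) (X.2 j)).det * Delta X.2

/-- The un-normalized average `I_N[O]` of the coupled matrix model. -/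
noncomputable def cmmAvg (N : ℕ) (wL wR : ℝ → ℂ) (ω : ℝ → ℝ → ℂ)
    (O : (Fin N → ℝ) → (Fin N → ℝ) → ℂ) : ℂ :=
  ((N.factorial : ℂ) ^ 2)⁻¹ * ∫ X : (Fin N → ℝ) × (Fin N → ℝ), cmmIntegrand N wL wR ω O X

section Determinants

variable {ι R : Type*} [Fintype ι] [DecidableEq ι] [CommRing R]

theorem Matrix.det_eq_sum_sign_mul_prod_apply (M : Matrix ι ι R) :
    M.det = ∑ σ : Equiv.Perm ι, (Equiv.Perm.sign σ : R) * ∏ i, M i (σ i) := by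
  rw [← det_transpose, det_apply']
  rfl

theorem Int.cast_units_mul_self (u : ℤˣ) : (u : R) * u = 1 := by
  rw [← Int.cast_mul, ← Units.val_mul, Int.units_mul_self, Units.val_one, Int.cast_one]

theorem Matrix.sum_sign_mul_sign_mul_sign_mul_prod_eq_factorial_sq_mul_det (M : Matrix ι ι R) :
    ∑ ρ : Equiv.Perm ι, ∑ τ : Equiv.Perm ι, ∑ σ : Equiv.Perm ι,
      (Equiv.Perm.sign ρ : R) * Equiv.Perm.sign τ * Equiv.Perm.sign σ *
        ∏ i, M (σ i) (ρ (τ i)) = ((Fintype.card ι).factorial : R) ^ 2 * M.det := by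
  have hinner (ρ τ : Equiv.Perm ι) : ∑ σ : Equiv.Perm ι,
      (Equiv.Perm.sign σ : R) * ∏ i, M (σ i) (ρ (τ i)) =
        Equiv.Perm.sign ρ * Equiv.Perm.sign τ * M.det := by
    calc _ = (M.submatrix id (ρ * τ)).det := (det_apply' _).symm
      _ = _ := by rw [det_permute', Equiv.Perm.sign_mul, Units.val_mul, Int.cast_mul]
  have hterm (ρ τ : Equiv.Perm ι) : ∑ σ : Equiv.Perm ι,
      (Equiv.Perm.sign ρ : R) * Equiv.Perm.sign τ * Equiv.Perm.sign σ *
        ∏ i, M (σ i) (ρ (τ i)) = M.det := by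
    simp only [mul_assoc, ← mul_sum]
    rw [← mul_assoc, hinner]
    linear_combination (Equiv.Perm.sign ρ * Equiv.Perm.sign ρ * M.det) *
      Int.cast_units_mul_self (R := R) (Equiv.Perm.sign τ) +
      M.det * Int.cast_units_mul_self (R := R) (Equiv.Perm.sign ρ)
  simp only [hterm, sum_const, card_univ, Fintype.card_perm, nsmul_eq_mul]
  ring

end Determinants

section Decoupling

variable {ι α β 𝕜 : Type*} [MeasureSpace α] [MeasureSpace β]

/-- Splits a tuple of pairs `z` into `(fun i => (z i).1, y)` with `y (τ i) = (z i).2`. -/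
noncomputable def unzipPerm (τ : Equiv.Perm ι) : (ι → α × β) ≃ᵐ (ι → α) × (ι → β) :=
  (MeasurableEquiv.arrowProdEquivProdArrow α β ι).trans
    ((MeasurableEquiv.refl _).prodCongr (MeasurableEquiv.piCongrLeft (fun _ => β) τ))

theorem unzipPerm_apply_fst (τ : Equiv.Perm ι) (z : ι → α × β) (i : ι) :
    (unzipPerm τ z).1 i = (z i).1 :=
  rfl

theorem unzipPerm_apply_snd (τ : Equiv.Perm ι) (z : ι → α × β) (i : ι) :
    (unzipPerm τ z).2 (τ i) = (z i).2 := by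
  change MeasurableEquiv.piCongrLeft (fun _ => β) τ (fun j => (z j).2) (τ i) = (z i).2
  rw [MeasurableEquiv.coe_piCongrLeft, Equiv.piCongrLeft_apply_apply]

variable [Fintype ι]

theorem prod_comp_unzipPerm {M : Type*} [CommMonoid M] (τ : Equiv.Perm ι) (g : ι → α × β → M)
    (z : ι → α × β) :
    ∏ i, g i ((unzipPerm τ z).1 i, (unzipPerm τ z).2 (τ i)) = ∏ i, g i (z i) := by
  simp only [unzipPerm_apply_fst, unzipPerm_apply_snd]

variable [SigmaFinite (volume : Measure α)] [SigmaFinite (volume : Measure β)] [RCLike 𝕜]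

theorem measurePreserving_unzipPerm (τ : Equiv.Perm ι) :
    MeasurePreserving (unzipPerm (α := α) (β := β) τ) volume volume :=
  ((MeasurePreserving.id volume).prod (volume_measurePreserving_piCongrLeft (fun _ => β) τ)).comp
    (volume_measurePreserving_arrowProdEquivProdArrow α β ι)

theorem integrable_prod_perm (τ : Equiv.Perm ι) {g : ι → α × β → 𝕜} (hg : ∀ i, Integrable (g i)) :
    Integrable fun X : (ι → α) × (ι → β) => ∏ i, g i (X.1 i, X.2 (τ i)) := by
  rw [← (measurePreserving_unzipPerm τ).integrable_comp_emb (unzipPerm τ).measurableEmbedding]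
  have h := Integrable.fintype_prod (μ := fun _ => volume) hg
  rw [← volume_pi] at h
  simpa only [Function.comp_def, prod_comp_unzipPerm] using h

theorem integral_prod_perm (τ : Equiv.Perm ι) (g : ι → α × β → 𝕜) :
    ∫ X : (ι → α) × (ι → β), ∏ i, g i (X.1 i, X.2 (τ i)) = ∏ i, ∫ s, g i s := by
  rw [← (measurePreserving_unzipPerm τ).integral_comp'
    (fun X => ∏ i, g i (X.1 i, X.2 (τ i)))]
  simp only [prod_comp_unzipPerm]
  exact integral_fintype_prod_volume_eq_prod g

end Decoupling

section Andreief

variable {ι : Type*} [Fintype ι] [DecidableEq ι] (wL wR : ℝ → ℂ) (ω : ℝ → ℝ → ℂ)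

theorem prod_weight_mul_det_mul_det_mul_det_eq_sum (f g : ι → ℝ → ℂ) (x y : ι → ℝ) :
    (∏ i, wL (x i) * wR (y i)) * (of fun i j => f j (x i)).det *
        (of fun i j => ω (x i) (y j)).det * (of fun i j => g j (y i)).det =
      ∑ ρ : Equiv.Perm ι, ∑ τ : Equiv.Perm ι, ∑ σ : Equiv.Perm ι,
        (Equiv.Perm.sign ρ : ℂ) * Equiv.Perm.sign τ * Equiv.Perm.sign σ *
          ∏ i, pairingIntegrand wL wR ω (f (σ i)) (g (ρ (τ i))) (x i, y (τ i)) := by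
  simp only [det_eq_sum_sign_mul_prod_apply, of_apply, mul_sum, sum_mul]
  refine sum_congr rfl fun ρ _ => sum_congr rfl fun τ _ => sum_congr rfl fun σ _ => ?_
  have hwR := Equiv.prod_comp τ fun i => wR (y i)
  have hg := Equiv.prod_comp τ fun i => g (ρ i) (y i)
  simp only [pairingIntegrand, prod_mul_distrib] at hwR hg ⊢
  rw [← hwR, ← hg]
  ring

theorem integral_prod_weight_mul_det_mul_det_mul_det (f g : ι → ℝ → ℂ)
    (hfg : ∀ i j, Integrable (pairingIntegrand wL wR ω (f i) (g j))) :
    ∫ X : (ι → ℝ) × (ι → ℝ), (∏ i, wL (X.1 i) * wR (X.2 i)) * (of fun i j => f j (X.1 i)).det *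
        (of fun i j => ω (X.1 i) (X.2 j)).det * (of fun i j => g j (X.2 i)).det =
      ((Fintype.card ι).factorial : ℂ) ^ 2 * (of fun i j => pairing wL wR ω (f i) (g j)).det := by
  have hint (ρ τ σ : Equiv.Perm ι) : Integrable fun X : (ι → ℝ) × (ι → ℝ) =>
      (Equiv.Perm.sign ρ : ℂ) * Equiv.Perm.sign τ * Equiv.Perm.sign σ *
        ∏ i, pairingIntegrand wL wR ω (f (σ i)) (g (ρ (τ i))) (X.1 i, X.2 (τ i)) :=
    (integrable_prod_perm τ fun i => hfg _ _).const_mul _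
  simp only [prod_weight_mul_det_mul_det_mul_det_eq_sum]
  calc _ = ∑ ρ : Equiv.Perm ι, ∑ τ : Equiv.Perm ι, ∑ σ : Equiv.Perm ι,
        ∫ X : (ι → ℝ) × (ι → ℝ), (Equiv.Perm.sign ρ : ℂ) * Equiv.Perm.sign τ *
          Equiv.Perm.sign σ *
            ∏ i, pairingIntegrand wL wR ω (f (σ i)) (g (ρ (τ i))) (X.1 i, X.2 (τ i)) := by
        rw [integral_finsetSum _ fun ρ _ => integrable_finsetSum _ fun τ _ =>
          integrable_finsetSum _ fun σ _ => hint ρ τ σ]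
        refine sum_congr rfl fun ρ _ => ?_
        rw [integral_finsetSum _ fun τ _ => integrable_finsetSum _ fun σ _ => hint ρ τ σ]
        exact sum_congr rfl fun τ _ => integral_finsetSum _ fun σ _ => hint ρ τ σ
    _ = _ := by
        simp only [integral_const_mul, integral_prod_perm]
        exact Matrix.sum_sign_mul_sign_mul_sign_mul_prod_eq_factorial_sq_mul_det
          (of fun i j => pairing wL wR ω (f i) (g j))

end Andreief

theorem prod_prod_Ioi_sub_eq_neg_one_pow_mul_det_vandermonde {R : Type*} [CommRing R] {n : ℕ}
    (v : Fin n → R) :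
    ∏ i : Fin n, ∏ j ∈ Ioi i, (v i - v j) =
      (-1) ^ (∑ i : Fin n, #(Ioi i)) * (vandermonde v).det := by
  rw [det_vandermonde, ← prod_pow_eq_pow_sum, ← prod_mul_distrib]
  refine prod_congr rfl fun i _ => ?_
  rw [← prod_const, ← prod_mul_distrib]
  exact prod_congr rfl fun j _ => by ring

open Polynomial in
theorem Delta_mul_Delta_eq_det_mul_det {n : ℕ} (x y : Fin n → ℝ) (p q : Fin n → ℂ[X])
    (hp : ∀ i, (p i).Monic ∧ (p i).natDegree = i) (hq : ∀ i, (q i).Monic ∧ (q i).natDegree = i) :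
    Delta x * Delta y =
      (of fun i j => (p j).eval (x i : ℂ)).det * (of fun i j => (q j).eval (y i : ℂ)).det := by
  rw [Delta, Delta, prod_prod_Ioi_sub_eq_neg_one_pow_mul_det_vandermonde,
    prod_prod_Ioi_sub_eq_neg_one_pow_mul_det_vandermonde,
    det_eval_matrixOfPolynomials_eq_det_vandermonde _ p (fun i => (hp i).2) (fun i => (hp i).1),
    det_eval_matrixOfPolynomials_eq_det_vandermonde _ q (fun i => (hq i).2) (fun i => (hq i).1),
    mul_mul_mul_comm, ← pow_add, ← two_mul, pow_mul, neg_one_sq, one_pow, one_mul]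

theorem cmmIntegrand_one_eq {N : ℕ} (wL wR : ℝ → ℂ) (ω : ℝ → ℝ → ℂ) (P Q : ℕ → Polynomial ℂ)
    (hP : ∀ k < N, (P k).Monic ∧ (P k).natDegree = k)
    (hQ : ∀ k < N, (Q k).Monic ∧ (Q k).natDegree = k) (X : (Fin N → ℝ) × (Fin N → ℝ)) :
    cmmIntegrand N wL wR ω (fun _ _ => 1) X =
      (∏ i, wL (X.1 i) * wR (X.2 i)) * (of fun i j : Fin N => (P j).eval (X.1 i : ℂ)).det *
        (of fun i j => ω (X.1 i) (X.2 j)).det *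
          (of fun i j : Fin N => (Q j).eval (X.2 i : ℂ)).det := by
  have hΔ := Delta_mul_Delta_eq_det_mul_det X.1 X.2 (fun i => P i) (fun i => Q i)
    (fun i => hP i i.isLt) (fun i => hQ i i.isLt)
  simp only [cmmIntegrand]
  linear_combination (∏ i, wL (X.1 i) * wR (X.2 i)) * (of fun i j => ω (X.1 i) (X.2 j)).det * hΔ

theorem coupled_partition_function_factorizes_general (N : ℕ)
    (wL wR : ℝ → ℂ) (ω : ℝ → ℝ → ℂ)
    (P Q : ℕ → Polynomial ℂ) (h : ℕ → ℂ)
    (hP : ∀ k < N, (P k).Monic ∧ (P k).natDegree = k)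
    (hQ : ∀ k < N, (Q k).Monic ∧ (Q k).natDegree = k)
    (hpairInt : ∀ i < N, ∀ j < N, Integrable (pairingIntegrand wL wR ω
      (fun x => (P i).eval (x : ℂ)) (fun y => (Q j).eval (y : ℂ))))
    (hbo : ∀ i < N, ∀ j < N,
      pairing wL wR ω (fun x => (P i).eval (x : ℂ)) (fun y => (Q j).eval (y : ℂ))
        = if i = j then h i else 0) :
    cmmAvg N wL wR ω (fun _ _ => 1) = ∏ i ∈ Finset.range N, h i := by
  have hdiag : (of fun i j : Fin N => pairing wL wR ω (fun x => (P i).eval (x : ℂ))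
      (fun y => (Q j).eval (y : ℂ))) = diagonal fun i : Fin N => h i := by
    refine Matrix.ext fun i j => ?_
    simp [hbo i i.isLt j j.isLt, diagonal_apply, Fin.val_inj]
  have hAndreief := integral_prod_weight_mul_det_mul_det_mul_det wL wR ω
    (fun (i : Fin N) x => (P i).eval (x : ℂ)) (fun (j : Fin N) y => (Q j).eval (y : ℂ))
    fun i j => hpairInt i i.isLt j j.isLt
  rw [Fintype.card_fin, hdiag, det_diagonal, Fin.prod_univ_eq_prod_range h] at hAndreief
  simp only [cmmAvg, cmmIntegrand_one_eq wL wR ω P Q hP hQ, hAndreief]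
  exact inv_mul_cancel_left₀ (pow_ne_zero 2 (Nat.cast_ne_zero.mpr N.factorial_ne_zero)) _

/-- If `P_0,…,P_{N−1}` and `Q_0,…,Q_{N−1}` are biorthogonal monic polynomials with
normalization constants `h_0,…,h_{N−1}`, and all the integrals involved are absolutely
convergent, then the partition function factorizes as `Z_N = ∏_{i=0}^{N−1} h_i`. -/
theorem coupled_partition_function_factorizes (N : ℕ) (hN : 1 ≤ N)
    (wL wR : ℝ → ℂ) (ω : ℝ → ℝ → ℂ)
    (hwL : Measurable wL) (hwR : Measurable wR) (hω : Measurable (Function.uncurry ω))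
    (P Q : ℕ → Polynomial ℂ) (h : ℕ → ℂ)
    (hP : ∀ k < N, (P k).Monic ∧ (P k).natDegree = k)
    (hQ : ∀ k < N, (Q k).Monic ∧ (Q k).natDegree = k)
    (hZ : Integrable (cmmIntegrand N wL wR ω fun _ _ => 1))
    (hpairInt : ∀ i < N, ∀ j < N, Integrable (pairingIntegrand wL wR ω
      (fun x => (P i).eval (x : ℂ)) (fun y => (Q j).eval (y : ℂ))))
    (hbo : ∀ i < N, ∀ j < N,
      pairing wL wR ω (fun x => (P i).eval (x : ℂ)) (fun y => (Q j).eval (y : ℂ))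
        = if i = j then h i else 0) :
    cmmAvg N wL wR ω (fun _ _ => 1) = ∏ i ∈ Finset.range N, h i :=
  coupled_partition_function_factorizes_general N wL wR ω P Q h hP hQ hpairInt hbo
end

section
/- Characteristic polynomial average: Let M ≥ 1 and let P_0,…,P_{N+M−1} and Q_0,…,Q_{N+M−1} be biorthogonal monic polynomials with normalization constants h_0,…,h_{N+M−1}, with h_i ≠ 0 for 0 ≤ i ≤ N−1, and assume all integrals involved are absolutely convergent. Then for pairwise distinct z_1,…,z_M ∈ ℂ: I_N[ ∏_{α=1}^M ∏_{i=1}^N (z_α − x_{L,i}) ] = ( ∏_{i=0}^{N−1} h_i / Δ_M(Z) ) · det_{1≤α,β≤M}( P_{N+M−β}(z_α) ), where Δ_M(Z) = ∏_{α<β}(z_α − z_β). -/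
open MeasureTheory Matrix Finset

/-!
Multiplying the observable by `Δ(X) Δ(Z)` gives the Vandermonde product `Δ(Z, X)` of the joint
tuple, and a Vandermonde product of `n` points is `det [p_{n-1-j}(v_i)]` for any monic family
with `deg p_k = k`. So the integrand is `Δ(Z)⁻¹ det[P_{N+M-1-j}(Z, X)] det[ω(x_i, y_j)]
det[Q_{N-1-j}(y_i)]` times the weights. Expanding the first determinant over permutations
separates the `Z`-rows from the `X`-rows, and for each term the `(X, Y)`-integral is Andréief's
identity `N! det ⟨f_i|ω|g_j⟩`. Summing back yields `(N!)² det B`, where `B` is the first matrix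
with each `X`-row replaced by pairings against `Q_{N-1-i}`; by biorthogonality `B` is block
triangular with diagonal block `diag(h_{N-1-i})`.
-/

open Equiv Polynomial

namespace MeasurableEquiv

variable {ι α β : Type*} [MeasureSpace α] [MeasureSpace β]

def zipPerm (τ : Perm ι) : (ι → α) × (ι → β) ≃ᵐ (ι → α × β) :=
  ((MeasurableEquiv.refl _).prodCongr (piCongrLeft (fun _ => β) τ.symm)).trans
    (arrowProdEquivProdArrow α β ι).symm

lemma zipPerm_apply (τ : Perm ι) (XY : (ι → α) × (ι → β)) (i : ι) :
    zipPerm τ XY i = (XY.1 i, XY.2 (τ i)) := by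
  simp [zipPerm, arrowProdEquivProdArrow, Equiv.arrowProdEquivProdArrow, prodCongr,
    coe_piCongrLeft, Equiv.piCongrLeft_apply_eq_cast]

lemma measurePreserving_zipPerm [Fintype ι] [SigmaFinite (volume : Measure α)]
    [SigmaFinite (volume : Measure β)] (τ : Perm ι) :
    MeasurePreserving (zipPerm (α := α) (β := β) τ) :=
  (volume_measurePreserving_arrowProdEquivProdArrow α β ι).symm _ |>.comp
    ((MeasurePreserving.id volume).prod (volume_measurePreserving_piCongrLeft _ τ.symm))

end MeasurableEquiv

namespace MeasureTheory

variable {ι α β 𝕜 : Type*} [Fintype ι] [MeasureSpace α] [MeasureSpace β]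
  [SigmaFinite (volume : Measure α)] [SigmaFinite (volume : Measure β)] [RCLike 𝕜]
  (F : ι → α × β → 𝕜) (τ : Perm ι)

lemma Integrable.fintype_prod_pair_perm (hF : ∀ i, Integrable (F i)) :
    Integrable fun XY : (ι → α) × (ι → β) => ∏ i, F i (XY.1 i, XY.2 (τ i)) := by
  simp_rw [← MeasurableEquiv.zipPerm_apply τ]
  exact (MeasurableEquiv.measurePreserving_zipPerm τ).integrable_comp_emb
    (MeasurableEquiv.zipPerm τ).measurableEmbedding |>.mpr (Integrable.fintype_prod hF)

lemma integral_fintype_prod_pair_perm :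
    ∫ XY : (ι → α) × (ι → β), ∏ i, F i (XY.1 i, XY.2 (τ i)) = ∏ i, ∫ s, F i s := by
  simp_rw [← MeasurableEquiv.zipPerm_apply τ]
  rw [(MeasurableEquiv.measurePreserving_zipPerm τ).integral_comp'
    (g := fun u => ∏ i, F i (u i))]
  exact integral_fintype_prod_volume_eq_prod F

end MeasureTheory

lemma Equiv.Perm.intCast_sign_mul_self {n R : Type*} [Fintype n] [DecidableEq n] [Ring R]
    (σ : Perm n) : (Perm.sign σ : R) * Perm.sign σ = 1 := by
  rw [← Int.cast_mul, ← Units.val_mul, Int.units_mul_self, Units.val_one, Int.cast_one]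

namespace Matrix

variable {m n R : Type*} [Fintype m] [DecidableEq m] [Fintype n] [DecidableEq n] [CommRing R]

lemma det_eq_sum_sign_mul_prod (A : Matrix n n R) :
    A.det = ∑ σ : Perm n, (Perm.sign σ : R) * ∏ i, A i (σ i) := by
  rw [← det_transpose, det_apply']
  rfl

lemma det_mul_det_eq_sum_sum (A G : Matrix n n R) :
    A.det * G.det =
      ∑ τ : Perm n, ∑ π : Perm n, (Perm.sign π : R) * ∏ i, A i (τ i) * G (τ i) (π i) := by
  rw [det_eq_sum_sign_mul_prod A, det_eq_sum_sign_mul_prod G, sum_mul]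
  refine sum_congr rfl fun τ _ => ?_
  rw [mul_sum, ← Equiv.sum_comp (Equiv.mulRight τ⁻¹)]
  refine sum_congr rfl fun π _ => ?_
  simp only [Equiv.coe_mulRight]
  rw [← Equiv.prod_comp τ (fun k => G k ((π * τ⁻¹) k)), prod_mul_distrib]
  simp only [Perm.sign_mul, Perm.sign_inv, Units.val_mul, Int.cast_mul, Perm.mul_apply,
    Perm.coe_inv, symm_apply_apply]
  linear_combination (Perm.sign π : R) * (∏ i, A i (τ i)) * (∏ i, G (τ i) (π i)) *
    Perm.intCast_sign_mul_self (R := R) τ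

lemma factorial_mul_det_eq_sum_perm (B : Matrix (m ⊕ n) (m ⊕ n) R) :
    (Fintype.card n).factorial * B.det =
      ∑ σ : Perm (m ⊕ n), (Perm.sign σ : R) * (∏ a, B (.inl a) (σ (.inl a))) *
        (of fun i j => B (.inr j) (σ (.inr i))).det := by
  have hrow : ∀ π : Perm n, ∑ σ : Perm (m ⊕ n), (Perm.sign σ : R) *
      (∏ a, B (.inl a) (σ (.inl a))) * ((Perm.sign π : R) * ∏ i, B (.inr (π i)) (σ (.inr i)))
      = B.det := fun π => by
    have hπ := det_permute (R := R) (Perm.sumCongr 1 π) B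
    rw [Perm.sign_sumCongr, Perm.sign_one, one_mul, det_eq_sum_sign_mul_prod] at hπ
    rw [← one_mul B.det, ← Perm.intCast_sign_mul_self (R := R) π, mul_assoc, ← hπ, mul_sum]
    refine sum_congr rfl fun σ _ => ?_
    simp only [Fintype.prod_sum_type, submatrix_apply, Perm.sumCongr_apply, Sum.map_inl,
      Sum.map_inr, Perm.one_apply, id]
    ring
  calc (Fintype.card n).factorial * B.det
      = ∑ π : Perm n, ∑ σ : Perm (m ⊕ n), (Perm.sign σ : R) * (∏ a, B (.inl a) (σ (.inl a))) *
          ((Perm.sign π : R) * ∏ i, B (.inr (π i)) (σ (.inr i))) := by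
        rw [sum_congr rfl fun π _ => hrow π]
        simp [Fintype.card_perm]
    _ = _ := by
        rw [sum_comm]
        refine sum_congr rfl fun σ _ => ?_
        rw [det_eq_sum_sign_mul_prod, mul_sum]
        rfl

end Matrix

section Andreief

variable {ι : Type*} [Fintype ι] [DecidableEq ι] (wL wR : ℝ → ℂ) (ω : ℝ → ℝ → ℂ)
  (f g : ι → ℝ → ℂ)

noncomputable def andreiefIntegrand : (ι → ℝ) × (ι → ℝ) → ℂ :=
  fun XY => (∏ i, f i (XY.1 i)) * (∏ i, wL (XY.1 i) * wR (XY.2 i)) *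
    (of fun i j => ω (XY.1 i) (XY.2 j)).det * (of fun i j => g j (XY.2 i)).det

lemma andreiefIntegrand_eq_sum (XY : (ι → ℝ) × (ι → ℝ)) :
    andreiefIntegrand wL wR ω f g XY = ∑ τ : Perm ι, ∑ π : Perm ι, (Perm.sign π : ℂ) *
      ∏ i, pairingIntegrand wL wR ω (f i) (g (π i)) (XY.1 i, XY.2 (τ i)) := by
  obtain ⟨X, Y⟩ := XY
  rw [andreiefIntegrand, mul_assoc, det_mul_det_eq_sum_sum, mul_sum]
  refine sum_congr rfl fun τ _ => ?_
  rw [mul_sum]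
  refine sum_congr rfl fun π _ => ?_
  simp only [of_apply, pairingIntegrand, prod_mul_distrib]
  rw [← Equiv.prod_comp τ (fun i => wR (Y i))]
  ring

variable {wL wR ω f g}

lemma integrable_andreiefIntegrand
    (hfg : ∀ i j, Integrable (pairingIntegrand wL wR ω (f i) (g j))) :
    Integrable (andreiefIntegrand wL wR ω f g) := by
  rw [funext (andreiefIntegrand_eq_sum wL wR ω f g)]
  exact integrable_finsetSum _ fun τ _ => integrable_finsetSum _ fun π _ =>
    (Integrable.fintype_prod_pair_perm _ τ fun i => hfg i (π i)).const_mul _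

lemma integral_andreiefIntegrand
    (hfg : ∀ i j, Integrable (pairingIntegrand wL wR ω (f i) (g j))) :
    ∫ XY, andreiefIntegrand wL wR ω f g XY =
      (Fintype.card ι).factorial * (of fun i j => pairing wL wR ω (f i) (g j)).det := by
  have hterm : ∀ τ π : Perm ι,
      Integrable fun XY : (ι → ℝ) × (ι → ℝ) => (Perm.sign π : ℂ) *
        ∏ i, pairingIntegrand wL wR ω (f i) (g (π i)) (XY.1 i, XY.2 (τ i)) := fun τ π =>
    (Integrable.fintype_prod_pair_perm _ τ fun i => hfg i (π i)).const_mul _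
  simp_rw [andreiefIntegrand_eq_sum]
  rw [integral_finsetSum _ fun τ _ => integrable_finsetSum _ fun π _ => hterm τ π]
  have hτ : ∀ τ : Perm ι, ∫ XY : (ι → ℝ) × (ι → ℝ), ∑ π : Perm ι, (Perm.sign π : ℂ) *
      ∏ i, pairingIntegrand wL wR ω (f i) (g (π i)) (XY.1 i, XY.2 (τ i)) =
        (of fun i j => pairing wL wR ω (f i) (g j)).det := fun τ => by
    rw [integral_finsetSum _ fun π _ => hterm τ π, det_eq_sum_sign_mul_prod]
    refine sum_congr rfl fun π _ => ?_
    rw [integral_const_mul, integral_fintype_prod_pair_perm]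
    rfl
  simp [hτ, Fintype.card_perm]

end Andreief

lemma Fin.prod_Ioi_append {m n : ℕ} {R : Type*} [CommMonoid R]
    (f : Fin (m + n) → Fin (m + n) → R) :
    ∏ k, ∏ l ∈ Ioi k, f k l =
      (∏ i, ∏ j ∈ Ioi i, f (Fin.castAdd n i) (Fin.castAdd n j)) *
      (∏ i, ∏ j ∈ Ioi i, f (Fin.natAdd m i) (Fin.natAdd m j)) *
      ∏ i, ∏ j, f (Fin.castAdd n i) (Fin.natAdd m j) := by
  have hIoi : ∀ {k : ℕ} (g : Fin k → R) (i : Fin k),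
      ∏ j ∈ Ioi i, g j = ∏ j, if i < j then g j else 1 := fun g i => by
    rw [← prod_filter, filter_lt_eq_Ioi]
  have hcc : ∀ i j : Fin m, Fin.castAdd n i < Fin.castAdd n j ↔ i < j := fun _ _ => Iff.rfl
  have hcn : ∀ (i : Fin m) (j : Fin n), Fin.castAdd n i < Fin.natAdd m j := fun i j => by
    simp only [Fin.lt_def, Fin.val_castAdd, Fin.val_natAdd]; omega
  have hnc : ∀ (i : Fin n) (j : Fin m), ¬ Fin.natAdd m i < Fin.castAdd n j := fun i j => by
    simp only [Fin.lt_def, Fin.val_castAdd, Fin.val_natAdd]; omega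
  simp only [hIoi, Fin.prod_univ_add, hcc, hcn, hnc, Fin.natAdd_lt_natAdd_iff, if_true, if_false,
    prod_const_one, prod_mul_distrib]
  rw [mul_one, ← mul_assoc, mul_right_comm]

lemma DeltaC_append {m n : ℕ} (a : Fin m → ℂ) (b : Fin n → ℂ) :
    DeltaC (Fin.append a b) = DeltaC a * DeltaC b * ∏ i, ∏ j, (a i - b j) := by
  simp only [DeltaC, Fin.prod_Ioi_append, Fin.append_left, Fin.append_right]

lemma DeltaC_eq_det_vandermonde_rev {n : ℕ} (v : Fin n → ℂ) :
    DeltaC v = (vandermonde (v ∘ Fin.rev)).det := by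
  rw [det_vandermonde, DeltaC]
  conv_rhs => rw [← Equiv.prod_comp Fin.revPerm]
  simp only [Function.comp_apply, Fin.revPerm_apply, Fin.rev_rev]
  have hIio : ∀ i : Fin n, ∏ j ∈ Ioi i.rev, (v j.rev - v i) = ∏ k ∈ Iio i, (v k - v i) := by
    intro i
    rw [← Fin.rev_rev i, ← Fin.map_revPerm_Ioi, prod_map, Fin.rev_rev]
    rfl
  simp only [hIio]
  exact prod_comm' fun i j => by simp

lemma DeltaC_eq_det_eval_rev {n : ℕ} (v : Fin n → ℂ) (p : Fin n → ℂ[X])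
    (hdeg : ∀ i, (p i).natDegree = i) (hmonic : ∀ i, (p i).Monic) :
    DeltaC v = (of fun i j => (p (Fin.rev j)).eval (v i)).det := by
  rw [DeltaC_eq_det_vandermonde_rev,
    det_eval_matrixOfPolynomials_eq_det_vandermonde _ p hdeg hmonic,
    ← det_submatrix_equiv_self Fin.revPerm]
  congr 1
  ext i j
  simp

lemma DeltaC_ne_zero {n : ℕ} {v : Fin n → ℂ} (hv : Function.Injective v) : DeltaC v ≠ 0 := by
  rw [DeltaC_eq_det_vandermonde_rev, det_vandermonde_ne_zero_iff]
  exact hv.comp Fin.rev_injective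

section CharPoly

variable {N M : ℕ} (wL wR : ℝ → ℂ) (ω : ℝ → ℝ → ℂ) (P Q : ℕ → ℂ[X]) (z : Fin M → ℂ)

/-- Columns are ordered by decreasing degree: `inl β` carries `P (N + M - 1 - β)` and `inr j`
carries `P (N - 1 - j)`. -/
def colPoly (c : Fin M ⊕ Fin N) : ℂ[X] := P (Fin.rev (finSumFinEquiv c))

lemma DeltaC_append_eq_sum (hP : ∀ k < N + M, (P k).Monic ∧ (P k).natDegree = k)
    (x : Fin N → ℂ) :
    DeltaC (Fin.append z x) = ∑ σ : Perm (Fin M ⊕ Fin N), (Perm.sign σ : ℂ) *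
      (∏ α, (colPoly P (σ (.inl α))).eval (z α)) * ∏ i, (colPoly P (σ (.inr i))).eval (x i) := by
  rw [DeltaC_eq_det_eval_rev _ (fun j => P j) (fun j => (hP j (by omega)).2)
    (fun j => (hP j (by omega)).1), ← det_submatrix_equiv_self finSumFinEquiv,
    det_eq_sum_sign_mul_prod]
  refine sum_congr rfl fun σ _ => ?_
  simp only [colPoly, Fintype.prod_sum_type, submatrix_apply, of_apply, finSumFinEquiv_apply_left,
    finSumFinEquiv_apply_right, Fin.append_left, Fin.append_right, mul_assoc]

lemma cmmIntegrand_charPoly_eq (hP : ∀ k < N + M, (P k).Monic ∧ (P k).natDegree = k)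
    (hQ : ∀ k < N, (Q k).Monic ∧ (Q k).natDegree = k) (hz : DeltaC z ≠ 0)
    (XY : (Fin N → ℝ) × (Fin N → ℝ)) :
    cmmIntegrand N wL wR ω (fun XL _ => ∏ α : Fin M, ∏ i : Fin N, (z α - (XL i : ℂ))) XY =
      (DeltaC z)⁻¹ * ∑ σ : Perm (Fin M ⊕ Fin N), (Perm.sign σ : ℂ) *
        (∏ α, (colPoly P (σ (.inl α))).eval (z α)) *
        andreiefIntegrand wL wR ω (fun i x => (colPoly P (σ (.inr i))).eval (x : ℂ))
          (fun j y => (Q (Fin.rev j)).eval (y : ℂ)) XY := by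
  obtain ⟨X, Y⟩ := XY
  have hX : (∏ α, ∏ i, (z α - (X i : ℂ))) * Delta X =
      (DeltaC z)⁻¹ * DeltaC (Fin.append z fun i => (X i : ℂ)) := by
    rw [DeltaC_append, Delta]
    field_simp
    rfl
  have hY : Delta Y = (of fun i j => (Q (Fin.rev j)).eval (Y i : ℂ)).det :=
    DeltaC_eq_det_eval_rev (fun i => (Y i : ℂ)) (fun j => Q j) (fun j => (hQ j j.isLt).2)
      (fun j => (hQ j j.isLt).1)
  calc cmmIntegrand N wL wR ω (fun XL _ => ∏ α : Fin M, ∏ i : Fin N, (z α - (XL i : ℂ))) (X, Y)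
      = ((∏ α, ∏ i, (z α - (X i : ℂ))) * Delta X) * (∏ i, wL (X i) * wR (Y i)) *
          (of fun i j => ω (X i) (Y j)).det * Delta Y := by
        rw [cmmIntegrand]
        ring
    _ = _ := by
        rw [hX, hY, DeltaC_append_eq_sum P z hP, mul_sum, sum_mul, sum_mul, sum_mul, mul_sum]
        refine sum_congr rfl fun σ _ => ?_
        rw [andreiefIntegrand]
        ring

/-- The matrix `[colPoly c (z, X)]` with each `X`-row `j` integrated out against
`ω` and `Q (N - 1 - j)`. -/
noncomputable def charPolyMatrix : Matrix (Fin M ⊕ Fin N) (Fin M ⊕ Fin N) ℂ :=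
  of fun k c => Sum.elim (fun α => (colPoly P c).eval (z α))
    (fun j => pairing wL wR ω (fun x => (colPoly P c).eval (x : ℂ))
      (fun y => (Q (Fin.rev j)).eval (y : ℂ))) k

lemma det_charPolyMatrix (h : ℕ → ℂ) (hbo : ∀ i < N + M, ∀ j < N + M,
      pairing wL wR ω (fun x => (P i).eval (x : ℂ)) (fun y => (Q j).eval (y : ℂ)) =
        if i = j then h i else 0) :
    (charPolyMatrix (N := N) wL wR ω P Q z).det =
      (∏ i ∈ range N, h i) * (of fun α β : Fin M => (P (N + M - 1 - β)).eval (z α)).det := by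
  set B := charPolyMatrix (N := N) wL wR ω P Q z
  have h₁₁ : B.toBlocks₁₁ = of fun α β : Fin M => (P (N + M - 1 - β)).eval (z α) := by
    ext α β
    simp only [B, charPolyMatrix, colPoly, toBlocks₁₁, of_apply, Sum.elim_inl,
      finSumFinEquiv_apply_left, Fin.val_rev, Fin.val_castAdd]
    congr 2
    omega
  have h₂₁ : B.toBlocks₂₁ = 0 := by
    ext j β
    simp only [B, charPolyMatrix, colPoly, toBlocks₂₁, of_apply, Sum.elim_inr,
      finSumFinEquiv_apply_left, Fin.val_rev, Fin.val_castAdd, Matrix.zero_apply]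
    rw [hbo _ (by omega) _ (by omega), if_neg (by omega)]
  have h₂₂ : B.toBlocks₂₂ = diagonal fun j => h (Fin.rev j) := by
    ext j i
    simp only [B, charPolyMatrix, colPoly, toBlocks₂₂, of_apply, Sum.elim_inr,
      finSumFinEquiv_apply_right, Fin.val_rev, Fin.val_natAdd, diagonal_apply]
    rw [hbo _ (by omega) _ (by omega)]
    by_cases hji : j = i
    · subst hji
      rw [if_pos (by omega), if_pos rfl]
      congr 1
      omega
    · rw [if_neg hji, if_neg fun hij => hji (Fin.ext (by omega))]
  rw [← fromBlocks_toBlocks B, h₁₁, h₂₁, h₂₂, det_fromBlocks_zero₂₁, det_diagonal, mul_comm,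
    ← Fin.prod_univ_eq_prod_range, ← Equiv.prod_comp Fin.revPerm (fun j : Fin N => h j)]
  rfl

lemma integral_cmmIntegrand_charPoly (hP : ∀ k < N + M, (P k).Monic ∧ (P k).natDegree = k)
    (hQ : ∀ k < N, (Q k).Monic ∧ (Q k).natDegree = k)
    (hpairInt : ∀ i < N + M, ∀ j < N, Integrable (pairingIntegrand wL wR ω
      (fun x => (P i).eval (x : ℂ)) (fun y => (Q j).eval (y : ℂ))))
    (hz : DeltaC z ≠ 0) :
    ∫ XY, cmmIntegrand N wL wR ω (fun XL _ => ∏ α : Fin M, ∏ i : Fin N, (z α - (XL i : ℂ))) XY =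
      (DeltaC z)⁻¹ *
        (N.factorial * (N.factorial * (charPolyMatrix (N := N) wL wR ω P Q z).det)) := by
  have hpair : ∀ (c : Fin M ⊕ Fin N) (j : Fin N), Integrable (pairingIntegrand wL wR ω
      (fun x => (colPoly P c).eval (x : ℂ)) (fun y => (Q (Fin.rev j)).eval (y : ℂ))) :=
    fun c j => hpairInt _ (by omega) _ (by omega)
  have hL := factorial_mul_det_eq_sum_perm (charPolyMatrix (N := N) wL wR ω P Q z)
  rw [Fintype.card_fin] at hL
  rw [funext (cmmIntegrand_charPoly_eq wL wR ω P Q z hP hQ hz), integral_const_mul,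
    integral_finsetSum _ fun σ _ => (integrable_andreiefIntegrand fun i j => hpair _ j).const_mul _,
    hL]
  simp only [mul_sum]
  refine sum_congr rfl fun σ _ => ?_
  rw [integral_const_mul, integral_andreiefIntegrand fun i j => hpair _ j, Fintype.card_fin]
  simp only [charPolyMatrix, of_apply, Sum.elim_inl, Sum.elim_inr]
  ring

end CharPoly

theorem char_poly_average_general (N M : ℕ)
    (wL wR : ℝ → ℂ) (ω : ℝ → ℝ → ℂ)
    (P Q : ℕ → Polynomial ℂ) (h : ℕ → ℂ)
    (hP : ∀ k < N + M, (P k).Monic ∧ (P k).natDegree = k)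
    (hQ : ∀ k < N + M, (Q k).Monic ∧ (Q k).natDegree = k)
    (hpairInt : ∀ i < N + M, ∀ j < N + M, Integrable (pairingIntegrand wL wR ω
      (fun x => (P i).eval (x : ℂ)) (fun y => (Q j).eval (y : ℂ))))
    (hbo : ∀ i < N + M, ∀ j < N + M,
      pairing wL wR ω (fun x => (P i).eval (x : ℂ)) (fun y => (Q j).eval (y : ℂ))
        = if i = j then h i else 0)
    (z : Fin M → ℂ) (hz : Function.Injective z) :
    cmmAvg N wL wR ω (fun XL _ => ∏ α : Fin M, ∏ i : Fin N, (z α - (XL i : ℂ)))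
      = ((∏ i ∈ Finset.range N, h i) / DeltaC z) *
          (Matrix.of fun α β : Fin M =>
            (P (N + M - 1 - (β : ℕ))).eval (z α)).det := by
  rw [cmmAvg, integral_cmmIntegrand_charPoly wL wR ω P Q z hP (fun k hk => hQ k (by omega))
    (fun i hi j hj => hpairInt i hi j (by omega)) (DeltaC_ne_zero hz),
    det_charPolyMatrix wL wR ω P Q z h hbo]
  have hfac : (N.factorial : ℂ) ≠ 0 := Nat.cast_ne_zero.mpr N.factorial_ne_zero
  field_simp

/-- **Characteristic polynomial average.** For biorthogonal monic polynomials
`P_0,…,P_{N+M−1}`, `Q_0,…,Q_{N+M−1}` with normalization constants `h_i` (`h_i ≠ 0` for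
`i < N`) and pairwise distinct `z_1,…,z_M`,
`I_N[∏_{α,i}(z_α − x_{L,i})] = (∏_{i<N} h_i / Δ_M(Z)) · det( P_{N+M−β}(z_α) )`. -/
theorem char_poly_average (N M : ℕ) (hN : 1 ≤ N) (hM : 1 ≤ M)
    (wL wR : ℝ → ℂ) (ω : ℝ → ℝ → ℂ)
    (hwL : Measurable wL) (hwR : Measurable wR) (hω : Measurable (Function.uncurry ω))
    (P Q : ℕ → Polynomial ℂ) (h : ℕ → ℂ)
    (hP : ∀ k < N + M, (P k).Monic ∧ (P k).natDegree = k)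
    (hQ : ∀ k < N + M, (Q k).Monic ∧ (Q k).natDegree = k)
    (hh : ∀ i < N, h i ≠ 0)
    (hpairInt : ∀ i < N + M, ∀ j < N + M, Integrable (pairingIntegrand wL wR ω
      (fun x => (P i).eval (x : ℂ)) (fun y => (Q j).eval (y : ℂ))))
    (hbo : ∀ i < N + M, ∀ j < N + M,
      pairing wL wR ω (fun x => (P i).eval (x : ℂ)) (fun y => (Q j).eval (y : ℂ))
        = if i = j then h i else 0)
    (z : Fin M → ℂ) (hz : Function.Injective z)
    (hObs : Integrable (cmmIntegrand N wL wR ω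
      fun XL _ => ∏ α : Fin M, ∏ i : Fin N, (z α - (XL i : ℂ)))) :
    cmmAvg N wL wR ω (fun XL _ => ∏ α : Fin M, ∏ i : Fin N, (z α - (XL i : ℂ)))
      = ((∏ i ∈ Finset.range N, h i) / DeltaC z) *
          (Matrix.of fun α β : Fin M =>
            (P (N + M - 1 - (β : ℕ))).eval (z α)).det :=
  char_poly_average_general N M wL wR ω P Q h hP hQ hpairInt hbo z hz
end
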